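/- arXiv:1903.06361 — 6 statements merged into one kernel-verified Lean document; each statement's English description precedes it below -/
import Mathlib

section
/- Let L̃ and L be (possibly asymmetric) n×n real matrices with U := (L+Lᵀ)/2 PSD. Then L̃ is a directed ε-approximation of L if and only if for all vectors x, y ∈ ℝⁿ, xᵀ(L̃-L)y ≤ (ε/2)·(xᵀUx + yᵀUy). -/
open Matrix

private lemma aux_dp {n : ℕ} (A : Matrix (Fin n) (Fin n) ℝ) (u w : Fin n → ℝ) :
    u ⬝ᵥ A *ᵥ w = (Aᵀ *ᵥ u) ⬝ᵥ w := by
  rw [Matrix.dotProduct_mulVec, Matrix.mulVec_transpose]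

private lemma dp_self_nonneg {n : ℕ} (u : Fin n → ℝ) : 0 ≤ u ⬝ᵥ u :=
  Finset.sum_nonneg fun _ _ => mul_self_nonneg _

private lemma dp_cs {n : ℕ} (u w : Fin n → ℝ) : (u ⬝ᵥ w)^2 ≤ (u ⬝ᵥ u) * (w ⬝ᵥ w) := by
  have h := Finset.sum_mul_sq_le_sq_mul_sq Finset.univ u w
  simpa only [dotProduct, ← pow_two] using h

private lemma dp_sum_sq {n : ℕ} (u : Fin n → ℝ) : ∑ i, (u i)^2 = u ⬝ᵥ u := by
  simp [dotProduct, sq]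

private lemma scalar_fwd {c A B D ε : ℝ} (hc : c^2 ≤ A * D) (hD : D ≤ ε^2 * B)
    (hA : 0 ≤ A) (hB : 0 ≤ B) (hε : 0 ≤ ε) :
    c ≤ ε/2 * (A + B) := by
  have hE : 0 ≤ ε/2 * (A + B) := by positivity
  have hce : c^2 ≤ (ε/2*(A+B))^2 := by
    nlinarith [mul_le_mul_of_nonneg_left hD hA, mul_nonneg (sq_nonneg ε) (sq_nonneg (A-B))]
  nlinarith [hce, hE]

/-- Lemma 3.5 of CKPPRSV16: `L'` is a directed ε-approximation of `L`
(with `U = (L+Lᵀ)/2` PSD, `R` the symmetric PSD square root of the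
Moore--Penrose pseudoinverse of `U`, characterized by the Penrose equations
for `R*R`) iff the quadratic-form inequality holds for all `x, y`. -/
theorem stmt_6 {n : ℕ} {L L' U R : Matrix (Fin n) (Fin n) ℝ} {ε : ℝ}
    (hε : 0 ≤ ε)
    (hU : U = (2⁻¹ : ℝ) • (L + Lᵀ)) (hUpsd : U.PosSemidef)
    (hR : R.PosSemidef)
    (hMP1 : U * (R * R) * U = U) (hMP2 : (R * R) * U * (R * R) = R * R)
    (hMP3 : (U * (R * R)).IsSymm) (hMP4 : ((R * R) * U).IsSymm) :
    ((∀ v : Fin n → ℝ, U.mulVec v = 0 →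
        (L' - L).mulVec v = 0 ∧ (L' - L)ᵀ.mulVec v = 0) ∧
     (∀ v : Fin n → ℝ,
        Real.sqrt (∑ i, ((R * (L' - L) * R).mulVec v i) ^ 2) ≤
          ε * Real.sqrt (∑ i, (v i) ^ 2)))
    ↔
    (∀ x y : Fin n → ℝ,
      x ⬝ᵥ (L' - L).mulVec y ≤
        (ε / 2) * (x ⬝ᵥ U.mulVec x + y ⬝ᵥ U.mulVec y)) := by
  set Δ := L' - L with hΔ
  set M := R * Δ * R with hM
  have hRs : Rᵀ = R := hR.1
  have hUs : Uᵀ = U := hUpsd.1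
  have hsq_iff : ∀ v : Fin n → ℝ,
      (Real.sqrt (∑ i, (M.mulVec v i) ^ 2) ≤ ε * Real.sqrt (∑ i, (v i) ^ 2)) ↔
      ((M *ᵥ v) ⬝ᵥ (M *ᵥ v) ≤ ε^2 * (v ⬝ᵥ v)) := by
    intro v
    rw [dp_sum_sq, dp_sum_sq]
    have h1 : ε * Real.sqrt (v ⬝ᵥ v) = Real.sqrt (ε^2 * (v ⬝ᵥ v)) := by
      rw [Real.sqrt_mul (sq_nonneg ε), Real.sqrt_sq hε]
    rw [h1]
    exact Real.sqrt_le_sqrt_iff (mul_nonneg (sq_nonneg ε) (dp_self_nonneg v))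
  have hstep : ∀ (a w : Fin n → ℝ), (R *ᵥ a) ⬝ᵥ w = a ⬝ᵥ R *ᵥ w := by
    intro a w; rw [aux_dp R a w, hRs]
  have hRMR : ∀ a b : Fin n → ℝ, (R *ᵥ a) ⬝ᵥ Δ *ᵥ (R *ᵥ b) = a ⬝ᵥ M *ᵥ b := by
    intro a b
    rw [hstep, mulVec_mulVec, mulVec_mulVec]
  have hUR : ∀ z : Fin n → ℝ, (R *ᵥ z) ⬝ᵥ U *ᵥ (R *ᵥ z) = z ⬝ᵥ (R*U*R) *ᵥ z := by
    intro z
    rw [hstep, mulVec_mulVec, mulVec_mulVec]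
  constructor
  · rintro ⟨hker, hnorm⟩ x y
    have hP0 : ∀ z : Fin n → ℝ, U *ᵥ (z - (R*R*U) *ᵥ z) = 0 := by
      intro z
      have e : U * (R*R*U) = U := by rw [← mul_assoc, hMP1]
      rw [mulVec_sub, mulVec_mulVec, e, sub_self]
    obtain ⟨hx1, hx2⟩ := hker _ (hP0 x)
    obtain ⟨hy1, hy2⟩ := hker _ (hP0 y)
    set a := (R*U) *ᵥ x with ha
    set b := (R*U) *ᵥ y with hb
    have hPx : (R*R*U) *ᵥ x = R *ᵥ a := by rw [ha, mulVec_mulVec, mul_assoc]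
    have hPy : (R*R*U) *ᵥ y = R *ᵥ b := by rw [hb, mulVec_mulVec, mul_assoc]
    have key : x ⬝ᵥ Δ *ᵥ y = a ⬝ᵥ M *ᵥ b := by
      have e1 : Δ *ᵥ y = Δ *ᵥ (R *ᵥ b) := by
        have e0 : y = (R *ᵥ b) + (y - (R*R*U) *ᵥ y) := by rw [← hPy]; abel
        rw [show Δ *ᵥ y = Δ *ᵥ ((R *ᵥ b) + (y - (R*R*U) *ᵥ y)) by rw [← e0],
          mulVec_add, hy1, add_zero]
      rw [e1]
      have e2 : x ⬝ᵥ Δ *ᵥ (R *ᵥ b) =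
          (R *ᵥ a) ⬝ᵥ Δ *ᵥ (R *ᵥ b) + (x - (R*R*U) *ᵥ x) ⬝ᵥ Δ *ᵥ (R *ᵥ b) := by
        rw [← add_dotProduct, ← hPx]
        congr 1
        abel
      rw [e2, aux_dp Δ (x - (R*R*U) *ᵥ x), hx2, zero_dotProduct, add_zero, hRMR]
    have hnormsq : ∀ (z : Fin n → ℝ), ((R*U) *ᵥ z) ⬝ᵥ ((R*U) *ᵥ z) = z ⬝ᵥ U *ᵥ z := by
      intro z
      rw [dotProduct_comm, aux_dp, mulVec_mulVec, transpose_mul, hRs, hUs,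
        show U * R * (R * U) = U by rw [mul_assoc, ← mul_assoc R R U, ← mul_assoc, hMP1],
        dotProduct_comm]
    have hMb := (hsq_iff b).mp (hnorm b)
    rw [key]
    calc a ⬝ᵥ M *ᵥ b ≤ ε/2 * (a ⬝ᵥ a + b ⬝ᵥ b) :=
          scalar_fwd (dp_cs a (M *ᵥ b)) hMb (dp_self_nonneg a) (dp_self_nonneg b) hε
      _ = ε/2 * (x ⬝ᵥ U *ᵥ x + y ⬝ᵥ U *ᵥ y) := by rw [ha, hb, hnormsq x, hnormsq y]
  · intro h
    constructor
    · intro v hv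
      have hzero1 : ∀ x : Fin n → ℝ, x ⬝ᵥ Δ *ᵥ v = 0 := by
        intro x
        have key : ∀ t : ℝ, t * (x ⬝ᵥ Δ *ᵥ v) ≤ ε/2 * (x ⬝ᵥ U *ᵥ x) := by
          intro t
          have h1 := h x (t • v)
          rw [mulVec_smul, dotProduct_smul, mulVec_smul, hv, smul_zero,
            dotProduct_zero, add_zero] at h1
          simpa using h1
        by_contra hne
        have h1 := key ((ε/2 * (x ⬝ᵥ U *ᵥ x) + 1) / (x ⬝ᵥ Δ *ᵥ v))
        rw [div_mul_cancel₀ _ hne] at h1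
        linarith
      have hzero2 : ∀ y : Fin n → ℝ, v ⬝ᵥ Δ *ᵥ y = 0 := by
        intro y
        have key : ∀ t : ℝ, t * (v ⬝ᵥ Δ *ᵥ y) ≤ ε/2 * (y ⬝ᵥ U *ᵥ y) := by
          intro t
          have h1 := h (t • v) y
          simp only [smul_dotProduct, dotProduct_smul, mulVec_smul, hv, smul_zero,
            dotProduct_zero, zero_add, smul_eq_mul, mul_zero, add_zero] at h1
          linarith [h1]
        by_contra hne
        have h1 := key ((ε/2 * (y ⬝ᵥ U *ᵥ y) + 1) / (v ⬝ᵥ Δ *ᵥ y))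
        rw [div_mul_cancel₀ _ hne] at h1
        linarith
      constructor
      · exact dotProduct_self_eq_zero.mp (hzero1 (Δ *ᵥ v))
      · have h2 : (Δᵀ *ᵥ v) ⬝ᵥ (Δᵀ *ᵥ v) = 0 := by
          rw [← aux_dp]; exact hzero2 _
        exact dotProduct_self_eq_zero.mp h2
    · intro v
      rw [hsq_iff]
      have hPP : (R*U*R) * (R*U*R) = R*U*R := by
        calc (R*U*R) * (R*U*R) = R*(U*(R*R)*U)*R := by simp only [mul_assoc]
          _ = R*U*R := by rw [hMP1]
      have hPs : (R*U*R)ᵀ = R*U*R := by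
        rw [transpose_mul, transpose_mul, hRs, hUs, mul_assoc]
      have hproj : ∀ aa : Fin n → ℝ, aa ⬝ᵥ (R*U*R) *ᵥ aa ≤ aa ⬝ᵥ aa := by
        intro aa
        have h1 : aa ⬝ᵥ (R*U*R) *ᵥ aa = ((R*U*R) *ᵥ aa) ⬝ᵥ ((R*U*R) *ᵥ aa) := by
          conv_lhs => rw [← hPP, ← mulVec_mulVec, aux_dp, hPs]
        have h2 := dp_cs aa ((R*U*R) *ᵥ aa)
        rw [h1] at h2 ⊢
        nlinarith [dp_self_nonneg ((R*U*R) *ᵥ aa), dp_self_nonneg aa]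
      have hab : ∀ aa bb : Fin n → ℝ,
          aa ⬝ᵥ M *ᵥ bb ≤ ε/2 * (aa ⬝ᵥ aa + bb ⬝ᵥ bb) := by
        intro aa bb
        have h1 := h (R *ᵥ aa) (R *ᵥ bb)
        rw [hRMR, hUR aa, hUR bb] at h1
        have h2 := hproj aa
        have h3 := hproj bb
        nlinarith [h1, h2, h3, hε]
      set c := (M *ᵥ v) ⬝ᵥ (M *ᵥ v) with hc
      set V := v ⬝ᵥ v with hV
      have hc0 : 0 ≤ c := dp_self_nonneg _
      have hV0 : 0 ≤ V := dp_self_nonneg _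
      rcases eq_or_lt_of_le hc0 with hceq | hcpos
      · rw [← hceq]
        positivity
      · have hVpos : 0 < V := by
          rcases eq_or_lt_of_le hV0 with hVeq | hVpos
          · exfalso
            have hVeq' : v ⬝ᵥ v = 0 := by rw [← hV, ← hVeq]
            have hv0 : v = 0 := dotProduct_self_eq_zero.mp hVeq'
            rw [hc, hv0, mulVec_zero] at hcpos
            simp at hcpos
          · exact hVpos
        have hsc : (0:ℝ) < Real.sqrt c := Real.sqrt_pos.mpr hcpos
        have hsV : (0:ℝ) < Real.sqrt V := Real.sqrt_pos.mpr hVpos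
        set s := Real.sqrt V / Real.sqrt c with hs
        have key := hab (s • (M *ᵥ v)) v
        simp only [smul_dotProduct, dotProduct_smul, smul_eq_mul] at key
        rw [← hc, ← hV] at key
        have hcc : Real.sqrt c * Real.sqrt c = c := Real.mul_self_sqrt hc0
        have hVV : Real.sqrt V * Real.sqrt V = V := Real.mul_self_sqrt hV0
        have hsq : s * (s * c) = V := by
          rw [hs]; field_simp; nlinarith [hcc, hVV]
        have hsc2 : s * c = Real.sqrt V * Real.sqrt c := by
          rw [hs]; field_simp; nlinarith [hcc]
        rw [hsq, hsc2] at key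
        have key3 : (Real.sqrt V * Real.sqrt c) * (Real.sqrt V * Real.sqrt c) ≤
            (ε/2 * (V + V)) * (ε/2 * (V + V)) :=
          mul_le_mul key key (by positivity) (by positivity)
        nlinarith [key3, hVV, hcc, hVpos]
end

section
/- Let N and Ñ be symmetric n×n matrices such that I - Ñ ≈_ε I - N, and suppose N is PSD. Then I + Ñ ≈_ε I + N. -/
open Matrix

theorem stmt_8 {n : ℕ} {N N' : Matrix (Fin n) (Fin n) ℝ} {ε : ℝ}
    (hε : 0 ≤ ε)
    (hN : N.IsSymm) (hN' : N'.IsSymm) (hNpsd : N.PosSemidef)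
    (h : ∀ v : Fin n → ℝ,
      (1 - ε) * (v ⬝ᵥ (1 - N).mulVec v) ≤ v ⬝ᵥ (1 - N').mulVec v ∧
      v ⬝ᵥ (1 - N').mulVec v ≤ (1 + ε) * (v ⬝ᵥ (1 - N).mulVec v)) :
    ∀ v : Fin n → ℝ,
      (1 - ε) * (v ⬝ᵥ (1 + N).mulVec v) ≤ v ⬝ᵥ (1 + N').mulVec v ∧
      v ⬝ᵥ (1 + N').mulVec v ≤ (1 + ε) * (v ⬝ᵥ (1 + N).mulVec v) := by
  intro v
  have hb : 0 ≤ v ⬝ᵥ N.mulVec v := by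
    have := hNpsd.dotProduct_mulVec_nonneg v
    simpa using this
  obtain ⟨h1, h2⟩ := h v
  simp only [sub_mulVec, add_mulVec, one_mulVec, dotProduct_sub, dotProduct_add] at *
  constructor <;> nlinarith
end

section
/- Let N and Ñ be symmetric n×n matrices with I - Ñ ≈_ε I - N and I + Ñ ≈_ε I + N. Then the 2n×2n block matrix [[I, -Ñ],[-Ñ, I]] is an ε-spectral approximation of [[I, -N],[-N, I]]. -/
open Matrix

lemma quad_block {n : ℕ} {N : Matrix (Fin n) (Fin n) ℝ} (hN : N.IsSymm)
    (x y : Fin n → ℝ) :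
    (Sum.elim x y) ⬝ᵥ (Matrix.fromBlocks 1 (-N) (-N) 1).mulVec (Sum.elim x y) =
      (1/2) * ((x + y) ⬝ᵥ (1 - N).mulVec (x + y) + (x - y) ⬝ᵥ (1 + N).mulVec (x - y)) := by
  have hsym : y ⬝ᵥ N.mulVec x = x ⬝ᵥ N.mulVec y := by
    rw [Matrix.dotProduct_mulVec, ← hN.eq, Matrix.vecMul_transpose, dotProduct_comm, hN.eq]
  rw [Matrix.fromBlocks_mulVec, sumElim_dotProduct_sumElim]
  simp only [Sum.elim_comp_inl, Sum.elim_comp_inr, Matrix.add_mulVec, Matrix.sub_mulVec,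
    Matrix.one_mulVec, Matrix.neg_mulVec, Matrix.mulVec_add, Matrix.mulVec_sub,
    dotProduct_add, dotProduct_sub, add_dotProduct, sub_dotProduct, dotProduct_neg,
    neg_dotProduct]
  linarith [hsym]

theorem stmt_9 {n : ℕ} {N N' : Matrix (Fin n) (Fin n) ℝ} {ε : ℝ}
    (hε : 0 ≤ ε)
    (hN : N.IsSymm) (hN' : N'.IsSymm)
    (h₁ : ∀ v : Fin n → ℝ,
      (1 - ε) * (v ⬝ᵥ (1 - N).mulVec v) ≤ v ⬝ᵥ (1 - N').mulVec v ∧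
      v ⬝ᵥ (1 - N').mulVec v ≤ (1 + ε) * (v ⬝ᵥ (1 - N).mulVec v))
    (h₂ : ∀ v : Fin n → ℝ,
      (1 - ε) * (v ⬝ᵥ (1 + N).mulVec v) ≤ v ⬝ᵥ (1 + N').mulVec v ∧
      v ⬝ᵥ (1 + N').mulVec v ≤ (1 + ε) * (v ⬝ᵥ (1 + N).mulVec v)) :
    ∀ v : (Fin n ⊕ Fin n) → ℝ,
      (1 - ε) * (v ⬝ᵥ (Matrix.fromBlocks 1 (-N) (-N) 1).mulVec v) ≤
        v ⬝ᵥ (Matrix.fromBlocks 1 (-N') (-N') 1).mulVec v ∧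
      v ⬝ᵥ (Matrix.fromBlocks 1 (-N') (-N') 1).mulVec v ≤
        (1 + ε) * (v ⬝ᵥ (Matrix.fromBlocks 1 (-N) (-N) 1).mulVec v) := by
  intro v
  have hv : v = Sum.elim (v ∘ Sum.inl) (v ∘ Sum.inr) := by
    funext i; cases i <;> rfl
  set x := v ∘ Sum.inl
  set y := v ∘ Sum.inr
  rw [hv, quad_block hN x y, quad_block hN' x y]
  obtain ⟨ha1, ha2⟩ := h₁ (x + y)
  obtain ⟨hb1, hb2⟩ := h₂ (x - y)
  constructor <;> linarith
end

section
/- Let Ñ, N₁, N₂ be symmetric n×n matrices with spectral norm at most 1, where N₁ is PSD and commutes with N₂. If I - Ñ ≈_ε I - N₁, then I - ½(ÑN₂ + N₂Ñ) ≈_ε I - N₂N₁. -/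
open Matrix

lemma dot_symm {n : ℕ} {A : Matrix (Fin n) (Fin n) ℝ} (hA : A.IsSymm)
    (x y : Fin n → ℝ) : x ⬝ᵥ (A *ᵥ y) = y ⬝ᵥ (A *ᵥ x) := by
  rw [dotProduct_mulVec, ← mulVec_transpose, hA.eq, dotProduct_comm]

lemma quad_one_sub {n : ℕ} (A : Matrix (Fin n) (Fin n) ℝ) (x : Fin n → ℝ) :
    x ⬝ᵥ ((1 - A) *ᵥ x) = x ⬝ᵥ x - x ⬝ᵥ (A *ᵥ x) := by
  simp [sub_mulVec, dotProduct_sub]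

lemma quad_one_add {n : ℕ} (A : Matrix (Fin n) (Fin n) ℝ) (x : Fin n → ℝ) :
    x ⬝ᵥ ((1 + A) *ᵥ x) = x ⬝ᵥ x + x ⬝ᵥ (A *ᵥ x) := by
  simp [add_mulVec, dotProduct_add]

lemma quad_add {n : ℕ} {A : Matrix (Fin n) (Fin n) ℝ} (hA : A.IsSymm)
    (x y : Fin n → ℝ) :
    (x + y) ⬝ᵥ (A *ᵥ (x + y))
      = x ⬝ᵥ (A *ᵥ x) + 2 * (x ⬝ᵥ (A *ᵥ y)) + y ⬝ᵥ (A *ᵥ y) := by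
  simp only [mulVec_add, dotProduct_add, add_dotProduct, dot_symm hA y x]
  ring

lemma quad_sub {n : ℕ} {A : Matrix (Fin n) (Fin n) ℝ} (hA : A.IsSymm)
    (x y : Fin n → ℝ) :
    (x - y) ⬝ᵥ (A *ᵥ (x - y))
      = x ⬝ᵥ (A *ᵥ x) - 2 * (x ⬝ᵥ (A *ᵥ y)) + y ⬝ᵥ (A *ᵥ y) := by
  simp only [mulVec_sub, dotProduct_sub, sub_dotProduct, dot_symm hA y x]
  ring

lemma dot_self_add {n : ℕ} (x y : Fin n → ℝ) :
    (x + y) ⬝ᵥ (x + y) = x ⬝ᵥ x + 2 * (x ⬝ᵥ y) + y ⬝ᵥ y := by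
  simp only [dotProduct_add, add_dotProduct, dotProduct_comm y x]
  ring

lemma dot_self_sub {n : ℕ} (x y : Fin n → ℝ) :
    (x - y) ⬝ᵥ (x - y) = x ⬝ᵥ x - 2 * (x ⬝ᵥ y) + y ⬝ᵥ y := by
  simp only [dotProduct_sub, sub_dotProduct, dotProduct_comm y x]
  ring

lemma psd_apply {n : ℕ} {A : Matrix (Fin n) (Fin n) ℝ} (hA : A.PosSemidef)
    (x : Fin n → ℝ) : 0 ≤ x ⬝ᵥ (A *ᵥ x) := by
  simpa using hA.dotProduct_mulVec_nonneg x

theorem stmt_12 {n : ℕ} {Nt N₁ N₂ : Matrix (Fin n) (Fin n) ℝ} {ε : ℝ}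
    (hε : 0 ≤ ε)
    (hNt : Nt.IsSymm) (hN₁ : N₁.IsSymm) (hN₂ : N₂.IsSymm)
    (hNtnorm : ((1 : Matrix (Fin n) (Fin n) ℝ) - Nt).PosSemidef ∧
               ((1 : Matrix (Fin n) (Fin n) ℝ) + Nt).PosSemidef)
    (hN₁norm : ((1 : Matrix (Fin n) (Fin n) ℝ) - N₁).PosSemidef ∧
               ((1 : Matrix (Fin n) (Fin n) ℝ) + N₁).PosSemidef)
    (hN₂norm : ((1 : Matrix (Fin n) (Fin n) ℝ) - N₂).PosSemidef ∧
               ((1 : Matrix (Fin n) (Fin n) ℝ) + N₂).PosSemidef)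
    (hN₁psd : N₁.PosSemidef)
    (hcomm : N₁ * N₂ = N₂ * N₁)
    (h : ∀ v : Fin n → ℝ,
      (1 - ε) * (v ⬝ᵥ (1 - N₁).mulVec v) ≤ v ⬝ᵥ (1 - Nt).mulVec v ∧
      v ⬝ᵥ (1 - Nt).mulVec v ≤ (1 + ε) * (v ⬝ᵥ (1 - N₁).mulVec v)) :
    ∀ v : Fin n → ℝ,
      (1 - ε) * (v ⬝ᵥ (1 - N₂ * N₁).mulVec v) ≤
        v ⬝ᵥ (1 - (2⁻¹ : ℝ) • (Nt * N₂ + N₂ * Nt)).mulVec v ∧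
      v ⬝ᵥ (1 - (2⁻¹ : ℝ) • (Nt * N₂ + N₂ * Nt)).mulVec v ≤
        (1 + ε) * (v ⬝ᵥ (1 - N₂ * N₁).mulVec v) := by
  intro v
  set u : Fin n → ℝ := N₂ *ᵥ v with hu
  -- scalar abbreviations
  set a : ℝ := v ⬝ᵥ v with ha
  set b : ℝ := v ⬝ᵥ (N₁ *ᵥ v) with hb
  set c : ℝ := v ⬝ᵥ (Nt *ᵥ v) with hc
  set d : ℝ := u ⬝ᵥ u with hd
  set e : ℝ := u ⬝ᵥ (N₁ *ᵥ u) with he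
  set f : ℝ := u ⬝ᵥ (Nt *ᵥ u) with hf
  set g : ℝ := v ⬝ᵥ u with hg
  set p : ℝ := v ⬝ᵥ (N₁ *ᵥ u) with hp
  set q : ℝ := v ⬝ᵥ (Nt *ᵥ u) with hq
  set s : ℝ := u ⬝ᵥ (N₂ *ᵥ u) with hs
  have sN₁ : u ⬝ᵥ (N₁ *ᵥ v) = p := dot_symm hN₁ u v
  have sNt : u ⬝ᵥ (Nt *ᵥ v) = q := dot_symm hNt u v
  have sN₂uv : u ⬝ᵥ (N₂ *ᵥ v) = d := rfl
  have sN₂vu : v ⬝ᵥ (N₂ *ᵥ u) = d := dot_symm hN₂ v u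
  have guv : u ⬝ᵥ v = g := dotProduct_comm u v
  -- goal reference form
  have egoal1 : v ⬝ᵥ ((1 - N₂ * N₁) *ᵥ v) = a - p := by
    rw [quad_one_sub, ← mulVec_mulVec, dot_symm hN₂ v (N₁ *ᵥ v),
      dotProduct_comm (N₁ *ᵥ v) (N₂ *ᵥ v)]
    rw [show N₂ *ᵥ v = u from rfl, dot_symm hN₁ u v]
  -- goal middle form
  have egoal2 : v ⬝ᵥ ((1 - (2⁻¹ : ℝ) • (Nt * N₂ + N₂ * Nt)) *ᵥ v) = a - q := by
    rw [quad_one_sub, smul_mulVec, dotProduct_smul, add_mulVec,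
      dotProduct_add, ← mulVec_mulVec, ← mulVec_mulVec,
      dot_symm hN₂ v (Nt *ᵥ v), dotProduct_comm (Nt *ᵥ v) (N₂ *ᵥ v)]
    rw [show N₂ *ᵥ v = u from rfl, dot_symm hNt u v]
    simp only [smul_eq_mul]
    ring
  -- hypothesis at u+v and u-v
  have H1 := h (u + v)
  have H2 := h (u - v)
  rw [quad_one_sub, quad_one_sub, dot_self_add, quad_add hN₁ u v,
    quad_add hNt u v, sN₁, sNt, guv] at H1
  rw [quad_one_sub, quad_one_sub, dot_self_sub, quad_sub hN₁ u v,
    quad_sub hNt u v, sN₁, sNt, guv] at H2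
  -- norm bound on u : d ≤ a
  have hd1 := psd_apply hN₂norm.1 (v + u)
  have hd2 := psd_apply hN₂norm.2 (v - u)
  rw [quad_one_sub, dot_self_add, quad_add hN₂ v u, sN₂vu] at hd1
  rw [quad_one_add, dot_self_sub, quad_sub hN₂ v u, sN₂vu] at hd2
  have hda : d ≤ a := by
    have : v ⬝ᵥ (N₂ *ᵥ v) = g := hg
    linarith
  -- positivity of N₁ quadratic form at v - u
  have hp1 := psd_apply hN₁psd (v - u)
  rw [quad_sub hN₁ v u] at hp1
  rw [egoal1, egoal2]
  constructor
  · nlinarith [mul_nonneg hε (by linarith : (0:ℝ) ≤ 4 * (a - p) - (2*(a-b) + 2*(d-e)))]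
  · nlinarith [mul_nonneg hε (by linarith : (0:ℝ) ≤ 4 * (a - p) - (2*(a-b) + 2*(d-e)))]
end

section
/- Let r be a positive integer with binary length ℓ(r), and let A, B be symmetric PSD n×n matrices with spectral norm at most 1 such that I - A ≈_ε I - B and I - B ≈_ε I - A for some ε ≤ 1/(2·ℓ(r)). Then I - Aʳ ≈_{2·ε·ℓ(r)} I - Bʳ. -/
open Matrix Finset

namespace Stmt14Aux

variable {n : ℕ}

/-- quadratic form -/
noncomputable def qf (A : Matrix (Fin n) (Fin n) ℝ) (v : Fin n → ℝ) : ℝ :=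
  v ⬝ᵥ A.mulVec v

lemma qf_nonneg {A : Matrix (Fin n) (Fin n) ℝ} (hA : A.PosSemidef) (v : Fin n → ℝ) :
    0 ≤ qf A v := by
  simpa [qf] using hA.dotProduct_mulVec_nonneg v

lemma qf_sub (A B : Matrix (Fin n) (Fin n) ℝ) (v : Fin n → ℝ) :
    qf (A - B) v = qf A v - qf B v := by
  simp [qf, Matrix.sub_mulVec, dotProduct_sub]

lemma qf_sum {ι : Type*} (s : Finset ι) (f : ι → Matrix (Fin n) (Fin n) ℝ) (v : Fin n → ℝ) :
    qf (∑ i ∈ s, f i) v = ∑ i ∈ s, qf (f i) v := by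
  classical
  induction s using Finset.induction with
  | empty => simp [qf]
  | insert _ _ h ih =>
      rw [Finset.sum_insert h, Finset.sum_insert h, ← ih]
      simp [qf, Matrix.add_mulVec, dotProduct_add]

lemma transpose_eq_self {A : Matrix (Fin n) (Fin n) ℝ} (hA : A.IsHermitian) : Aᵀ = A := by
  ext i j
  have h := congrFun (congrFun hA.eq i) j
  simpa [Matrix.conjTranspose_apply] using h

lemma dot_shift {C : Matrix (Fin n) (Fin n) ℝ} (hC : Cᵀ = C) (u w : Fin n → ℝ) :
    u ⬝ᵥ C.mulVec w = (C.mulVec u) ⬝ᵥ w := by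
  rw [Matrix.dotProduct_mulVec]
  congr 1
  conv_lhs => rw [← hC]
  rw [Matrix.vecMul_transpose]

lemma qf_conj {C M : Matrix (Fin n) (Fin n) ℝ} (hC : Cᵀ = C) (v : Fin n → ℝ) :
    qf (C * M * C) v = qf M (C.mulVec v) := by
  unfold qf
  rw [← Matrix.mulVec_mulVec, ← Matrix.mulVec_mulVec, dot_shift hC]

open scoped MatrixOrder in
/-- `A^m - A^(m+1)` is PSD when `0 ⪯ A ⪯ 1`. -/
lemma pow_sub_pow_succ_psd {A : Matrix (Fin n) (Fin n) ℝ} (hA : A.PosSemidef)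
    (hAn : ((1 : Matrix (Fin n) (Fin n) ℝ) - A).PosSemidef) (m : ℕ) :
    (A ^ m - A ^ (m + 1)).PosSemidef := by
  set S := CFC.sqrt A with hSdef
  have hS2 : S ^ 2 = A := by rw [pow_two, CFC.sqrt_mul_sqrt_self A hA.nonneg]
  have hSH : Sᴴ = S := (CFC.sqrt_nonneg A).posSemidef.isHermitian
  have hkey : S ^ m * (1 - A) * (S ^ m)ᴴ = A ^ m - A ^ (m + 1) := by
    rw [Matrix.conjTranspose_pow, hSH]
    have h1 : S ^ m * S ^ m = A ^ m := by
      rw [← pow_add, ← hS2, ← pow_mul]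
      congr 1
      ring
    have h2 : S ^ m * A * S ^ m = A ^ (m + 1) := by
      rw [← hS2, ← pow_add, ← pow_add, ← pow_mul]
      congr 1
      ring
    rw [Matrix.mul_sub, Matrix.mul_one, Matrix.sub_mul, h1, h2]
  rw [← hkey]
  exact hAn.mul_mul_conjTranspose_same (S ^ m)

lemma telescope_pow (A : Matrix (Fin n) (Fin n) ℝ) (r : ℕ) :
    (1 : Matrix (Fin n) (Fin n) ℝ) - A ^ r = ∑ i ∈ range r, (A ^ i - A ^ (i + 1)) := by
  rw [Finset.sum_range_sub' (f := fun i => A ^ i)]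
  simp

lemma qf_one_sub_pow_nonneg {A : Matrix (Fin n) (Fin n) ℝ} (hA : A.PosSemidef)
    (hAn : ((1 : Matrix (Fin n) (Fin n) ℝ) - A).PosSemidef) (r : ℕ) (v : Fin n → ℝ) :
    0 ≤ qf (1 - A ^ r) v := by
  rw [telescope_pow, qf_sum]
  exact Finset.sum_nonneg fun i _ => qf_nonneg (pow_sub_pow_succ_psd hA hAn i) v

lemma claimA {A : Matrix (Fin n) (Fin n) ℝ} (hA : A.PosSemidef)
    (hAn : ((1 : Matrix (Fin n) (Fin n) ℝ) - A).PosSemidef) (r : ℕ) (v : Fin n → ℝ) :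
    ∑ i ∈ range r, qf (1 - A) ((A ^ i).mulVec v) ≤ 2 * qf (1 - A ^ r) v := by
  have hAt : Aᵀ = A := transpose_eq_self hA.1
  have hpowt : ∀ k : ℕ, (A ^ k)ᵀ = A ^ k := fun k => by
    rw [Matrix.transpose_pow, hAt]
  have step1 : ∀ i : ℕ, qf (1 - A) ((A ^ i).mulVec v) = qf (A ^ (2 * i) - A ^ (2 * i + 1)) v := by
    intro i
    rw [← qf_conj (hpowt i) v]
    congr 1
    rw [Matrix.mul_sub, Matrix.mul_one, Matrix.sub_mul, ← pow_add]
    have h2 : A ^ i * A * A ^ i = A ^ (2 * i + 1) := by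
      rw [mul_assoc, ← pow_succ', ← pow_add]
      congr 1
      ring
    rw [h2]
    congr 2
    ring
  have step2 : ∀ i : ℕ, qf (A ^ (2 * i) - A ^ (2 * i + 1)) v ≤
      qf (A ^ (2 * i) - A ^ (2 * i + 2)) v := by
    intro i
    have h := qf_nonneg (pow_sub_pow_succ_psd hA hAn (2 * i + 1)) v
    have he : 2 * i + 1 + 1 = 2 * i + 2 := by omega
    rw [he, qf_sub] at h
    rw [qf_sub, qf_sub]
    linarith
  have step3 : ∑ i ∈ range r, qf (A ^ (2 * i) - A ^ (2 * i + 2)) v = qf (1 - A ^ (2 * r)) v := by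
    rw [← qf_sum]
    congr 1
    have := Finset.sum_range_sub' (f := fun i => A ^ (2 * i)) r
    simp only [Nat.mul_zero, pow_zero] at this
    rw [← this]
    apply Finset.sum_congr rfl
    intro i _
    congr 2 <;> omega
  have step4 : qf (1 - A ^ (2 * r)) v ≤ 2 * qf (1 - A ^ r) v := by
    have hpow : A ^ (2 * r) = A ^ r * A ^ r := by rw [two_mul, pow_add]
    have hM1H : ((1 : Matrix (Fin n) (Fin n) ℝ) - A ^ r)ᴴ = 1 - A ^ r := by
      rw [Matrix.conjTranspose_sub, Matrix.conjTranspose_one, Matrix.conjTranspose_pow, hA.1]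
    have hpsd : (((1 : Matrix (Fin n) (Fin n) ℝ) - A ^ r) * (1 - A ^ r)).PosSemidef := by
      nth_rewrite 1 [← hM1H]
      exact Matrix.posSemidef_conjTranspose_mul_self _
    have hid : ((1 : Matrix (Fin n) (Fin n) ℝ) - A ^ r) * (1 - A ^ r)
        = (1 - A ^ r) + (1 - A ^ r) - (1 - A ^ (2 * r)) := by
      rw [hpow]
      noncomm_ring
    have hadd : qf ((1 - A ^ r) + (1 - A ^ r)) v = qf (1 - A ^ r) v + qf (1 - A ^ r) v := by
      simp [qf, Matrix.add_mulVec, dotProduct_add]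
    have hq := qf_nonneg hpsd v
    rw [hid, qf_sub, hadd] at hq
    linarith
  calc ∑ i ∈ range r, qf (1 - A) ((A ^ i).mulVec v)
      = ∑ i ∈ range r, qf (A ^ (2 * i) - A ^ (2 * i + 1)) v := by
        exact Finset.sum_congr rfl fun i _ => step1 i
    _ ≤ ∑ i ∈ range r, qf (A ^ (2 * i) - A ^ (2 * i + 2)) v :=
        Finset.sum_le_sum fun i _ => step2 i
    _ = qf (1 - A ^ (2 * r)) v := step3
    _ ≤ 2 * qf (1 - A ^ r) v := step4

lemma pow_sub_pow_telescope (A B : Matrix (Fin n) (Fin n) ℝ) :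
    ∀ r : ℕ, A ^ r - B ^ r = ∑ i ∈ range r, A ^ i * (A - B) * B ^ (r - 1 - i)
  | 0 => by simp
  | (r + 1) => by
    rw [Finset.sum_range_succ']
    have hterm : ∀ i, A ^ (i + 1) * (A - B) * B ^ (r + 1 - 1 - (i + 1))
        = A * (A ^ i * (A - B) * B ^ (r - 1 - i)) := by
      intro i
      have he : r + 1 - 1 - (i + 1) = r - 1 - i := by omega
      rw [he, pow_succ']
      noncomm_ring
    rw [Finset.sum_congr rfl fun i _ => hterm i, ← Finset.mul_sum,
      ← pow_sub_pow_telescope A B r]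
    simp only [pow_zero, one_mul, Nat.add_sub_cancel, Nat.sub_zero]
    rw [pow_succ' (a := A), pow_succ' (a := B)]
    noncomm_ring

end Stmt14Aux

open Stmt14Aux

set_option maxHeartbeats 1000000 in
theorem stmt_14 {n : ℕ} {A B : Matrix (Fin n) (Fin n) ℝ} {r : ℕ} {ε : ℝ}
    (hr : 0 < r) (hε0 : 0 ≤ ε)
    (hA : A.PosSemidef) (hB : B.PosSemidef)
    (hAnorm : ((1 : Matrix (Fin n) (Fin n) ℝ) - A).PosSemidef)
    (hBnorm : ((1 : Matrix (Fin n) (Fin n) ℝ) - B).PosSemidef)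
    (hε : ε ≤ 1 / (2 * (Nat.size r : ℝ)))
    (hAB : ∀ v : Fin n → ℝ,
      (1 - ε) * (v ⬝ᵥ (1 - B).mulVec v) ≤ v ⬝ᵥ (1 - A).mulVec v ∧
      v ⬝ᵥ (1 - A).mulVec v ≤ (1 + ε) * (v ⬝ᵥ (1 - B).mulVec v))
    (hBA : ∀ v : Fin n → ℝ,
      (1 - ε) * (v ⬝ᵥ (1 - A).mulVec v) ≤ v ⬝ᵥ (1 - B).mulVec v ∧
      v ⬝ᵥ (1 - B).mulVec v ≤ (1 + ε) * (v ⬝ᵥ (1 - A).mulVec v)) :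
    ∀ v : Fin n → ℝ,
      (1 - 2 * ε * (Nat.size r : ℝ)) * (v ⬝ᵥ (1 - B ^ r).mulVec v) ≤
        v ⬝ᵥ (1 - A ^ r).mulVec v ∧
      v ⬝ᵥ (1 - A ^ r).mulVec v ≤
        (1 + 2 * ε * (Nat.size r : ℝ)) * (v ⬝ᵥ (1 - B ^ r).mulVec v) := by
  intro v
  -- rephrase everything with qf
  have hqf : ∀ (M : Matrix (Fin n) (Fin n) ℝ) (u : Fin n → ℝ),
      u ⬝ᵥ M.mulVec u = qf M u := fun _ _ => rfl
  by_cases hr1 : r = 1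
  · subst hr1
    have h1 := hAB v
    have h0 : (0:ℝ) ≤ v ⬝ᵥ (1 - B).mulVec v := qf_nonneg hBnorm v
    simp only [pow_one, Nat.size_one, Nat.cast_one]
    constructor
    · nlinarith [h1.1, h0, hε0]
    · nlinarith [h1.2, h0, hε0]
  · -- r ≥ 2
    have hr2 : 2 ≤ r := by omega
    set ℓ : ℝ := (Nat.size r : ℝ) with hℓdef
    clear_value ℓ
    have hℓ2 : (2:ℝ) ≤ ℓ := by
      have h2 : 2 ≤ Nat.size r := by
        by_contra h
        push_neg at h
        have := Nat.size_le.mp (by omega : Nat.size r ≤ 1)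
        omega
      rw [hℓdef]
      exact_mod_cast h2
    have hℓ0 : (0:ℝ) < ℓ := by linarith
    have hεℓ : ε * ℓ ≤ 1 / 2 := by
      have := mul_le_mul_of_nonneg_right hε (le_of_lt hℓ0)
      calc ε * ℓ ≤ 1 / (2 * ℓ) * ℓ := this
        _ = 1 / 2 := by
            field_simp
    have hε4 : ε ≤ 1 / 4 := by
      have h1 : 1 / (2 * ℓ) ≤ 1 / 4 :=
        one_div_le_one_div_of_le (by norm_num) (by linarith)
      linarith
    -- basic nonnegativity
    have hPA : 0 ≤ qf (1 - A ^ r) v := qf_one_sub_pow_nonneg hA hAnorm r v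
    have hPB : 0 ≤ qf (1 - B ^ r) v := qf_one_sub_pow_nonneg hB hBnorm r v
    set PA := qf (1 - A ^ r) v with hPAdef
    set PB := qf (1 - B ^ r) v with hPBdef
    clear_value PA PB
    -- symmetry of A - B
    have hAt : Aᵀ = A := transpose_eq_self hA.1
    have hBt : Bᵀ = B := transpose_eq_self hB.1
    have hEt : (A - B)ᵀ = A - B := by rw [Matrix.transpose_sub, hAt, hBt]
    -- the bilinear bound via polarization
    have hEq : ∀ u : Fin n → ℝ, qf (A - B) u = qf (1 - B) u - qf (1 - A) u := by
      intro u
      have h : A - B = (1 - B) - (1 - A) := by abel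
      rw [h, qf_sub]
    have hEub : ∀ u : Fin n → ℝ, qf (A - B) u ≤ ε * qf (1 - B) u := by
      intro u
      have := (hAB u).1
      rw [hqf, hqf] at this
      rw [hEq u]; linarith
    have hElb : ∀ u : Fin n → ℝ, -(ε * qf (1 - B) u) ≤ qf (A - B) u := by
      intro u
      have := (hAB u).2
      rw [hqf, hqf] at this
      rw [hEq u]; linarith
    have hbl : ∀ u w : Fin n → ℝ,
        |u ⬝ᵥ (A - B).mulVec w| ≤ ε / 2 * (qf (1 - B) u + qf (1 - B) w) := by
      intro u w
      have hsym : w ⬝ᵥ (A - B).mulVec u = u ⬝ᵥ (A - B).mulVec w := by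
        rw [dot_shift hEt, dotProduct_comm]
      have hpol : qf (A - B) (u + w) - qf (A - B) (u - w) = 4 * (u ⬝ᵥ (A - B).mulVec w) := by
        simp only [qf, Matrix.mulVec_add, Matrix.mulVec_sub, dotProduct_add, dotProduct_sub,
          add_dotProduct, sub_dotProduct]
        linarith [hsym]
      have hpar : qf (1 - B) (u + w) + qf (1 - B) (u - w)
          = 2 * qf (1 - B) u + 2 * qf (1 - B) w := by
        simp only [qf, Matrix.mulVec_add, Matrix.mulVec_sub, dotProduct_add, dotProduct_sub,
          add_dotProduct, sub_dotProduct]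
        ring
      rw [abs_le]
      constructor
      · have h1 := hElb (u + w)
        have h2 := hEub (u - w)
        nlinarith [h1, h2, hpol, hpar]
      · have h1 := hEub (u + w)
        have h2 := hElb (u - w)
        nlinarith [h1, h2, hpol, hpar]
    -- the telescoping sum
    have hsum : PB - PA = ∑ i ∈ range r,
        ((A ^ i).mulVec v) ⬝ᵥ ((A - B).mulVec ((B ^ (r - 1 - i)).mulVec v)) := by
      have h1 : PB - PA = qf (A ^ r - B ^ r) v := by
        rw [hPAdef, hPBdef, qf_sub, qf_sub, qf_sub]
        ring
      rw [h1, pow_sub_pow_telescope A B r, qf_sum]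
      apply Finset.sum_congr rfl
      intro i _
      have hpowt : (A ^ i)ᵀ = A ^ i := by rw [Matrix.transpose_pow, hAt]
      unfold qf
      rw [← Matrix.mulVec_mulVec, ← Matrix.mulVec_mulVec, dot_shift hpowt]
    -- bound the sum
    have hsumbound : |PB - PA| ≤ ε * (1 + ε) * PA + ε * PB := by
      rw [hsum]
      calc |∑ i ∈ range r, ((A ^ i).mulVec v) ⬝ᵥ ((A - B).mulVec ((B ^ (r - 1 - i)).mulVec v))|
          ≤ ∑ i ∈ range r,
            |((A ^ i).mulVec v) ⬝ᵥ ((A - B).mulVec ((B ^ (r - 1 - i)).mulVec v))| :=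
            Finset.abs_sum_le_sum_abs _ _
        _ ≤ ∑ i ∈ range r, ε / 2 * (qf (1 - B) ((A ^ i).mulVec v)
              + qf (1 - B) ((B ^ (r - 1 - i)).mulVec v)) :=
            Finset.sum_le_sum fun i _ => hbl _ _
        _ = ε / 2 * (∑ i ∈ range r, qf (1 - B) ((A ^ i).mulVec v)
              + ∑ i ∈ range r, qf (1 - B) ((B ^ (r - 1 - i)).mulVec v)) := by
            rw [← Finset.sum_add_distrib, Finset.mul_sum]
        _ = ε / 2 * (∑ i ∈ range r, qf (1 - B) ((A ^ i).mulVec v)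
              + ∑ i ∈ range r, qf (1 - B) ((B ^ i).mulVec v)) := by
            rw [Finset.sum_range_reflect (fun i => qf (1 - B) ((B ^ i).mulVec v)) r]
        _ ≤ ε / 2 * ((1 + ε) * (2 * PA) + 2 * PB) := by
            apply mul_le_mul_of_nonneg_left _ (by linarith : (0:ℝ) ≤ ε / 2)
            have hA1 : ∑ i ∈ range r, qf (1 - B) ((A ^ i).mulVec v)
                ≤ (1 + ε) * ∑ i ∈ range r, qf (1 - A) ((A ^ i).mulVec v) := by
              rw [Finset.mul_sum]
              apply Finset.sum_le_sum
              intro i _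
              have := (hBA ((A ^ i).mulVec v)).2
              rw [hqf, hqf] at this
              exact this
            have hA2 : ∑ i ∈ range r, qf (1 - A) ((A ^ i).mulVec v) ≤ 2 * PA := by
              rw [hPAdef]; exact claimA hA hAnorm r v
            have hB2 : ∑ i ∈ range r, qf (1 - B) ((B ^ i).mulVec v) ≤ 2 * PB := by
              rw [hPBdef]; exact claimA hB hBnorm r v
            have hB0 : ∀ i ∈ range r, 0 ≤ qf (1 - A) ((A ^ i).mulVec v) :=
              fun i _ => qf_nonneg hAnorm _
            have hApos : 0 ≤ ∑ i ∈ range r, qf (1 - A) ((A ^ i).mulVec v) :=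
              Finset.sum_nonneg hB0
            nlinarith [hA1, hA2, hB2, hApos, hε0]
        _ = ε * (1 + ε) * PA + ε * PB := by ring
    -- final arithmetic
    simp only [hqf]
    rw [← hPAdef, ← hPBdef]
    have habs := abs_le.mp hsumbound
    clear hqf hAB hBA hEq hEub hElb hbl hsum hsumbound hPAdef hPBdef hA hB hAnorm hBnorm
    clear hAt hBt hEt hℓdef hr1 hr hr2 hε
    clear A B
    constructor
    · -- lower bound
      rcases le_or_gt (1 - 2 * ε * ℓ) 0 with hc | hc
      · calc (1 - 2 * ε * ℓ) * PB ≤ 0 := mul_nonpos_of_nonpos_of_nonneg hc hPB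
          _ ≤ PA := hPA
      · have h1 : (1 - ε) * PB ≤ (1 + ε + ε ^ 2) * PA := by nlinarith [habs.2]
        have hεℓ2 : 2 * ε ≤ ε * ℓ := by nlinarith [mul_nonneg hε0 (by linarith : (0:ℝ) ≤ ℓ - 2)]
        have hq2 : (0:ℝ) ≤ 1 + ε + ε ^ 2 := by nlinarith [mul_nonneg hε0 hε0]
        have hkey : (1 - 2 * ε * ℓ) * (1 + ε + ε ^ 2) ≤ 1 - ε := by
          nlinarith [mul_le_mul_of_nonneg_right hεℓ2 hq2, mul_nonneg hε0 hε0,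
            mul_nonneg (mul_nonneg hε0 hε0) hε0]
        have h2 : (1 - 2 * ε * ℓ) * ((1 - ε) * PB) ≤ (1 - 2 * ε * ℓ) * ((1 + ε + ε ^ 2) * PA) :=
          mul_le_mul_of_nonneg_left h1 (le_of_lt hc)
        have h3 : (1 - 2 * ε * ℓ) * (1 + ε + ε ^ 2) * PA ≤ (1 - ε) * PA :=
          mul_le_mul_of_nonneg_right hkey hPA
        have hεlt : (0:ℝ) < 1 - ε := by linarith
        have h4 : (1 - ε) * ((1 - 2 * ε * ℓ) * PB) ≤ (1 - ε) * PA := by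
          calc (1 - ε) * ((1 - 2 * ε * ℓ) * PB) = (1 - 2 * ε * ℓ) * ((1 - ε) * PB) := by ring
            _ ≤ (1 - 2 * ε * ℓ) * ((1 + ε + ε ^ 2) * PA) := h2
            _ = (1 - 2 * ε * ℓ) * (1 + ε + ε ^ 2) * PA := by ring
            _ ≤ (1 - ε) * PA := h3
        exact le_of_mul_le_mul_left h4 hεlt
    · -- upper bound
      have h1 : (1 - ε - ε ^ 2) * PA ≤ (1 + ε) * PB := by nlinarith [habs.1]
      have hεℓ2 : 2 * ε ≤ ε * ℓ := by nlinarith [mul_nonneg hε0 (by linarith : (0:ℝ) ≤ ℓ - 2)]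
      have h6 : 2 * ε * (ε * ℓ) ≤ 2 * ε * (1 / 2) :=
        mul_le_mul_of_nonneg_left hεℓ (by linarith)
      have h7 : (2 * ε ^ 2) * (ε * ℓ) ≤ (2 * ε ^ 2) * (1 / 2) :=
        mul_le_mul_of_nonneg_left hεℓ (by nlinarith [mul_nonneg hε0 hε0])
      have h8 : ε * ε ≤ ε * (1 / 4) := mul_le_mul_of_nonneg_left hε4 hε0
      have hkey : (1 + ε) ≤ (1 + 2 * ε * ℓ) * (1 - ε - ε ^ 2) := by
        nlinarith [hεℓ2, h6, h7, h8]
      have hc : (0:ℝ) < 1 - ε - ε ^ 2 := by nlinarith [hε4, hε0]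
      have h2 : (1 - ε - ε ^ 2) * PA ≤ (1 - ε - ε ^ 2) * ((1 + 2 * ε * ℓ) * PB) := by
        calc (1 - ε - ε ^ 2) * PA ≤ (1 + ε) * PB := h1
          _ ≤ (1 + 2 * ε * ℓ) * (1 - ε - ε ^ 2) * PB := by
              apply mul_le_mul_of_nonneg_right hkey hPB
          _ = (1 - ε - ε ^ 2) * ((1 + 2 * ε * ℓ) * PB) := by ring
      exact le_of_mul_le_mul_left h2 hc
end

section
/- Let M̃ be a symmetric matrix with I - M̃ ≈_δ I - M² where M is symmetric with ‖M‖ ≤ 1 and δ ∈ (0,1). Let t = 1/δ be a positive integer and set M₀ = (t·M̃ + I)/(t+1). Then M₀ is PSD and I - M₀ ≈_{4δ/(1+δ)} I - M² (in particular I - M₀ ≈_ε I - M² whenever 4δ ≤ ε); more precisely, (1-δ)/(1+δ)·(I-M²) ⪯ I - M₀ ⪯ I - M². -/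
open Matrix

theorem stmt_18 {n : ℕ} {M Mt M₀ : Matrix (Fin n) (Fin n) ℝ} {δ : ℝ} {t : ℕ}
    (hδ : 0 < δ) (hδ1 : δ < 1)
    (hM : M.IsSymm) (hMt : Mt.IsSymm)
    (hMnorm : ((1 : Matrix (Fin n) (Fin n) ℝ) - M * M).PosSemidef)
    (ht : (t : ℝ) = 1 / δ) (htpos : 0 < t)
    (h : ∀ v : Fin n → ℝ,
      (1 - δ) * (v ⬝ᵥ (1 - M * M).mulVec v) ≤ v ⬝ᵥ (1 - Mt).mulVec v ∧
      v ⬝ᵥ (1 - Mt).mulVec v ≤ (1 + δ) * (v ⬝ᵥ (1 - M * M).mulVec v))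
    (hM₀ : M₀ = ((t : ℝ) / ((t : ℝ) + 1)) • Mt +
                ((1 : ℝ) / ((t : ℝ) + 1)) • (1 : Matrix (Fin n) (Fin n) ℝ)) :
    M₀.PosSemidef ∧
    (∀ v : Fin n → ℝ,
      (1 - 4 * δ / (1 + δ)) * (v ⬝ᵥ (1 - M * M).mulVec v) ≤ v ⬝ᵥ (1 - M₀).mulVec v ∧
      v ⬝ᵥ (1 - M₀).mulVec v ≤ (1 + 4 * δ / (1 + δ)) * (v ⬝ᵥ (1 - M * M).mulVec v)) ∧
    ((1 - M₀) - ((1 - δ) / (1 + δ)) • (1 - M * M)).PosSemidef ∧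
    ((1 - M * M) - (1 - M₀)).PosSemidef := by
  have htR : (0:ℝ) < t := by exact_mod_cast htpos
  have ht1 : (0:ℝ) < (t:ℝ) + 1 := by linarith
  have hδ1' : (0:ℝ) < 1 + δ := by linarith
  -- key identity: 1 - M₀ = (t/(t+1)) • (1 - Mt)
  have hkey : (1 : Matrix (Fin n) (Fin n) ℝ) - M₀ =
      ((t : ℝ) / ((t : ℝ) + 1)) • ((1 : Matrix (Fin n) (Fin n) ℝ) - Mt) := by
    rw [hM₀, smul_sub]
    have h1 : (1 : Matrix (Fin n) (Fin n) ℝ) =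
        ((t : ℝ) / ((t : ℝ) + 1)) • (1 : Matrix (Fin n) (Fin n) ℝ) +
        ((1 : ℝ) / ((t : ℝ) + 1)) • (1 : Matrix (Fin n) (Fin n) ℝ) := by
      rw [← add_smul]
      rw [← add_div, div_self (by positivity), one_smul]
    nth_rewrite 1 [h1]
    abel
  have hc : (t : ℝ) / ((t : ℝ) + 1) = 1 / (1 + δ) := by
    rw [ht]; field_simp
  -- quadratic form of 1 - M₀
  have hq : ∀ v : Fin n → ℝ, v ⬝ᵥ (1 - M₀).mulVec v =
      (1 / (1 + δ)) * (v ⬝ᵥ (1 - Mt).mulVec v) := by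
    intro v
    rw [hkey, hc, smul_mulVec, dotProduct_smul, smul_eq_mul]
  have hQpos : ∀ v : Fin n → ℝ, 0 ≤ v ⬝ᵥ (1 - M * M).mulVec v := by
    intro v
    have := hMnorm.dotProduct_mulVec_nonneg v
    simpa using this
  -- M*M PSD
  have hMM : (M * M).PosSemidef := by
    have := Matrix.posSemidef_conjTranspose_mul_self M
    have hMH : Mᴴ = M := hM
    rwa [hMH] at this
  -- bounds as in statement
  have hbounds : ∀ v : Fin n → ℝ,
      (1 - 4 * δ / (1 + δ)) * (v ⬝ᵥ (1 - M * M).mulVec v) ≤ v ⬝ᵥ (1 - M₀).mulVec v ∧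
      v ⬝ᵥ (1 - M₀).mulVec v ≤ (1 + 4 * δ / (1 + δ)) * (v ⬝ᵥ (1 - M * M).mulVec v) := by
    intro v
    obtain ⟨hl, hu⟩ := h v
    have hQ := hQpos v
    rw [hq v]
    constructor
    · have h1 : (1 - δ) / (1 + δ) * (v ⬝ᵥ (1 - M * M).mulVec v) ≤
          (1 / (1 + δ)) * (v ⬝ᵥ (1 - Mt).mulVec v) := by
        have := mul_le_mul_of_nonneg_left hl (le_of_lt (one_div_pos.2 hδ1'))
        calc (1 - δ) / (1 + δ) * (v ⬝ᵥ (1 - M * M).mulVec v)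
            = (1 / (1 + δ)) * ((1 - δ) * (v ⬝ᵥ (1 - M * M).mulVec v)) := by ring
          _ ≤ _ := this
      have h2 : (1 - 4 * δ / (1 + δ)) ≤ (1 - δ) / (1 + δ) := by
        rw [le_div_iff₀ hδ1']
        have e : (1 - 4 * δ / (1 + δ)) * (1 + δ) = (1 + δ) - 4 * δ := by
          field_simp
        rw [e]; linarith
      calc (1 - 4 * δ / (1 + δ)) * (v ⬝ᵥ (1 - M * M).mulVec v)
          ≤ (1 - δ) / (1 + δ) * (v ⬝ᵥ (1 - M * M).mulVec v) :=
            mul_le_mul_of_nonneg_right h2 hQ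
        _ ≤ _ := h1
    · have h1 : (1 / (1 + δ)) * (v ⬝ᵥ (1 - Mt).mulVec v) ≤
          v ⬝ᵥ (1 - M * M).mulVec v := by
        have := mul_le_mul_of_nonneg_left hu (le_of_lt (one_div_pos.2 hδ1'))
        calc (1 / (1 + δ)) * (v ⬝ᵥ (1 - Mt).mulVec v)
            ≤ (1 / (1 + δ)) * ((1 + δ) * (v ⬝ᵥ (1 - M * M).mulVec v)) := this
          _ = v ⬝ᵥ (1 - M * M).mulVec v := by field_simp
      have h2 : (1:ℝ) ≤ 1 + 4 * δ / (1 + δ) := by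
        have : 0 ≤ 4 * δ / (1 + δ) := by positivity
        linarith
      calc (1 / (1 + δ)) * (v ⬝ᵥ (1 - Mt).mulVec v)
          ≤ v ⬝ᵥ (1 - M * M).mulVec v := h1
        _ ≤ (1 + 4 * δ / (1 + δ)) * (v ⬝ᵥ (1 - M * M).mulVec v) := by
            nlinarith [hQ]
  -- symmetry facts
  have hM₀symm : M₀.IsSymm := by
    unfold Matrix.IsSymm
    rw [hM₀, transpose_add, transpose_smul, transpose_smul, transpose_one, hMt]
  have hMMsymm : (M * M).IsSymm := by
    unfold Matrix.IsSymm
    rw [transpose_mul, hM.eq]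
  have hM₀herm : M₀.IsHermitian := hM₀symm
  have hMMherm : (M * M).IsHermitian := hMMsymm
  refine ⟨PosSemidef.of_dotProduct_mulVec_nonneg hM₀herm ?_, hbounds, PosSemidef.of_dotProduct_mulVec_nonneg ?_ ?_, PosSemidef.of_dotProduct_mulVec_nonneg ?_ ?_⟩
  · -- PSD of M₀
    intro v
    simp only [star_trivial]
    have hid : v ⬝ᵥ M₀.mulVec v = v ⬝ᵥ v - v ⬝ᵥ (1 - M₀).mulVec v := by
      rw [sub_mulVec, dotProduct_sub, one_mulVec]; ring
    show (0:ℝ) ≤ v ⬝ᵥ M₀.mulVec v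
    rw [hid, hq v]
    obtain ⟨hl, hu⟩ := h v
    have hvv : v ⬝ᵥ (1 - M * M).mulVec v ≤ v ⬝ᵥ v := by
      have := hMM.dotProduct_mulVec_nonneg v
      simp only [star_trivial] at this
      have hsplit : v ⬝ᵥ (1 - M * M).mulVec v = v ⬝ᵥ v - v ⬝ᵥ (M * M).mulVec v := by
        rw [sub_mulVec, dotProduct_sub, one_mulVec]
      rw [hsplit]
      linarith
    have hub : v ⬝ᵥ (1 - Mt).mulVec v ≤ (1 + δ) * (v ⬝ᵥ v) :=
      le_trans hu (by nlinarith [hQpos v])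
    have h1δ : (1 / (1 + δ)) * (v ⬝ᵥ (1 - Mt).mulVec v) ≤ v ⬝ᵥ v := by
      have := mul_le_mul_of_nonneg_left hub (le_of_lt (one_div_pos.2 hδ1'))
      calc (1 / (1 + δ)) * (v ⬝ᵥ (1 - Mt).mulVec v)
          ≤ (1 / (1 + δ)) * ((1 + δ) * (v ⬝ᵥ v)) := this
        _ = v ⬝ᵥ v := by field_simp
    linarith
  · -- hermitian of (1 - M₀) - c • (1 - M*M)
    show (((1 - M₀) - ((1 - δ) / (1 + δ)) • (1 - M * M)) : Matrix (Fin n) (Fin n) ℝ).IsSymm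
    unfold Matrix.IsSymm
    simp [transpose_sub, transpose_smul, transpose_one, hM₀symm.eq, hMMsymm.eq]
  · intro v
    simp only [star_trivial]
    show (0:ℝ) ≤ v ⬝ᵥ ((1 - M₀) - ((1 - δ) / (1 + δ)) • (1 - M * M)).mulVec v
    rw [sub_mulVec, dotProduct_sub, smul_mulVec, dotProduct_smul, smul_eq_mul]
    rw [hq v]
    obtain ⟨hl, _⟩ := h v
    have hmul := mul_le_mul_of_nonneg_left hl (le_of_lt (one_div_pos.2 hδ1'))
    have heq : (1 / (1 + δ)) * ((1 - δ) * (v ⬝ᵥ (1 - M * M).mulVec v)) =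
        (1 - δ) / (1 + δ) * (v ⬝ᵥ (1 - M * M).mulVec v) := by ring
    linarith [heq ▸ hmul]
  · show (((1 - M * M) - (1 - M₀)) : Matrix (Fin n) (Fin n) ℝ).IsSymm
    unfold Matrix.IsSymm
    simp [transpose_sub, transpose_smul, transpose_one, hM₀symm.eq, hMMsymm.eq]
  · intro v
    simp only [star_trivial]
    show (0:ℝ) ≤ v ⬝ᵥ ((1 - M * M) - (1 - M₀)).mulVec v
    rw [sub_mulVec, dotProduct_sub, hq v]
    obtain ⟨_, hu⟩ := h v
    have hmul := mul_le_mul_of_nonneg_left hu (le_of_lt (one_div_pos.2 hδ1'))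
    have heq : (1 / (1 + δ)) * ((1 + δ) * (v ⬝ᵥ (1 - M * M).mulVec v)) =
        v ⬝ᵥ (1 - M * M).mulVec v := by field_simp
    linarith [heq ▸ hmul]
end
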